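/- arXiv:2012.04159 — 2 statements merged into one kernel-verified Lean document; each statement's English description precedes it below -/
import Mathlib

section
/- Let 0 < ρ < 1, and suppose a 2x2 real matrix M = [[a, b], [c, d]] satisfies d - c > 0 and 1 - ρ < (a-b)/(d-c) < 1/(1-ρ), and set s = (a-b)/(d-c). Then for any t with 0 < t ≤ ρ: (i) the product of R_t and M, multiplied in the appropriate order, has new ratio s' = t·s + 1, which satisfies 1 - ρ < s' < 1/(1-ρ); and (ii) the ratio s'' = s/(t + s) arising from left induction also satisfies 1 - ρ < s'' < 1/(1-ρ). -/
/-- The open interval `(1-ρ, 1/(1-ρ))` is invariant under the transformations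
`s ↦ t·s + 1` (right Rauzy induction) and `s ↦ s/(t + s)` (left Rauzy induction),
for every dilation factor `t ∈ (0, ρ]`, where `s = (a-b)/(d-c)` for a matrix
`M = [[a,b],[c,d]]` with `d - c > 0`. -/
theorem stmt2 (ρ a b c d s t : ℝ) (hρ0 : 0 < ρ) (hρ1 : ρ < 1)
    (hdc : 0 < d - c) (hs_def : s = (a - b) / (d - c))
    (hs1 : 1 - ρ < s) (hs2 : s < 1 / (1 - ρ))
    (ht0 : 0 < t) (htρ : t ≤ ρ) :
    (1 - ρ < t * s + 1 ∧ t * s + 1 < 1 / (1 - ρ)) ∧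
    (1 - ρ < s / (t + s) ∧ s / (t + s) < 1 / (1 - ρ)) := by
  have h1ρ : 0 < 1 - ρ := by linarith
  have hs0 : 0 < s := lt_trans h1ρ hs1
  have hs2' : s * (1 - ρ) < 1 := (lt_div_iff₀ h1ρ).mp hs2
  have hts : 0 < t + s := by linarith
  refine ⟨⟨by nlinarith, ?_⟩, ⟨?_, ?_⟩⟩
  · rw [lt_div_iff₀ h1ρ]; nlinarith
  · rw [lt_div_iff₀ hts]; nlinarith
  · have h1 : s / (t + s) < 1 := (div_lt_one hts).mpr (by linarith)
    have h2 : (1 : ℝ) < 1 / (1 - ρ) := one_lt_one_div h1ρ (by linarith)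
    linarith
end

section
/- Let T : [0,1] → [0,1] be a map and I ⊆ [0,1] a set disjoint from T([0,1]). Then for every x ∈ [0,1] and every n ≥ 0, the ω-limit set of x under T is disjoint from the interior of T^n(I), where the ω-limit set is the set of all limit points of the sequence (T^k(x))_{k≥0}. -/
open Function Set

/-- Points reached after more than `n` steps lie in the range of `f`, so if `f^[k] x = f^[n] i`
then injectivity peels off `n` steps and puts `i ∈ I` in the range of `f`. -/
theorem iterate_notMem_image_iterate_of_lt {α : Type*} {f : α → α} (hf : Injective f)
    {I : Set α} (hI : Disjoint I (range f)) (x : α) {n k : ℕ} (hnk : n < k) :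
    f^[k] x ∉ f^[n] '' I := by
  rintro ⟨i, hi, hik⟩
  have hsplit : f^[k] x = f^[n] (f (f^[k - n - 1] x)) := by
    rw [← iterate_succ_apply' f, ← iterate_add_apply]
    congr 2
    omega
  have hieq : i = f (f^[k - n - 1] x) := hf.iterate n (hik.trans hsplit)
  exact disjoint_left.mp hI hi ⟨_, hieq.symm⟩

/-- If `T : [0,1] → [0,1]` is injective and `I` is disjoint from the image of `T`,
then for every `x` and `n ≥ 0`, the ω-limit set of `x` under `T` (the set of all
limit points of the orbit) is disjoint from the interior of `T^n(I)`. -/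
theorem stmt11 (T : Set.Icc (0:ℝ) 1 → Set.Icc (0:ℝ) 1)
    (hinj : Function.Injective T)
    (I : Set (Set.Icc (0:ℝ) 1)) (hI : Disjoint I (Set.range T)) :
    ∀ x : Set.Icc (0:ℝ) 1, ∀ n : ℕ,
      Disjoint (⋂ N : ℕ, closure {y | ∃ k ≥ N, T^[k] x = y})
        (interior (T^[n] '' I)) := by
  intro x n
  have htail : Disjoint {y | ∃ k ≥ n + 1, T^[k] x = y} (interior (T^[n] '' I)) := by
    refine disjoint_left.mpr ?_
    rintro _ ⟨k, hk, rfl⟩ hmem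
    exact iterate_notMem_image_iterate_of_lt hinj hI x hk (interior_subset hmem)
  exact (htail.closure_left isOpen_interior).mono_left (iInter_subset _ (n + 1))
end
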